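/- arXiv:2403.19437 — 2 statements merged into one kernel-verified Lean document; each statement's English description precedes it below -/
import Mathlib

section
/- Let (Ω, 𝒜, μ) be an atom-free σ-finite measure space and K ∈ (0, μ(Ω)). Then the convex subdifferential of |·|_K at 0 (with respect to L^1(Ω)) equals { s ∈ L^∞(Ω) : ‖s‖_∞ ≤ 1, ‖s‖_1 ≤ K }, and for 0 ≠ u ∈ L^1(Ω), ∂|·|_K(u) = { s ∈ L^∞(Ω) : max(‖s‖_∞, K^{-1}‖s‖_1) = 1 and ∫_Ω s u dμ = |u|_K }. -/
open MeasureTheory Set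
open scoped ENNReal

/-- The largest-K-norm: `|u|_K = sup { ∫_A |u| dμ : A measurable, μ(A) ≤ K }`. -/
noncomputable def largestK {Ω : Type*} [MeasurableSpace Ω] (μ : Measure Ω) (K : ℝ≥0∞)
    (u : Ω → ℝ) : ℝ :=
  sSup {r : ℝ | ∃ A : Set Ω, MeasurableSet A ∧ μ A ≤ K ∧ r = ∫ x in A, |u x| ∂μ}

/-- A measure is atom-free if no measurable set `A` with `μ A > 0` is an atom. -/
def AtomFree {Ω : Type*} [MeasurableSpace Ω] (μ : Measure Ω) : Prop :=
  ∀ A : Set Ω, MeasurableSet A → 0 < μ A →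
    ∃ B : Set Ω, MeasurableSet B ∧ B ⊆ A ∧ 0 < μ B ∧ 0 < μ (A \ B)

/-!
The subgradients of `|·|_K` at `0` are the functionals it dominates, i.e. the unit ball of the dual
norm `‖s‖_* = max (‖s‖_∞, K⁻¹ ‖s‖₁)`. Testing `s` against `sign s · 1_F` gives
`∫_F |s| ≤ min (K, μ F)`, which bounds `‖s‖₁` by `K` and, since arbitrarily small sets of positive
measure exist, `‖s‖_∞` by `1`. Conversely, choose a level `t ≥ 0` with
`μ {|v| > t} ≤ K ≤ μ {|v| ≥ t}`: pointwise `|s v| ≤ ‖s‖_* (|v| - t)⁺ + t |s|`, and since `μ` has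
no atoms (Sierpiński) there is a set `A` with `μ A ≤ K` and `∫ (|v| - t)⁺ + t K = ∫_A |v|`, so
`∫ s v ≤ ‖s‖_* |v|_K`.
At `u ≠ 0`, positive homogeneity of `|·|_K` makes `s` a subgradient iff it is one at `0` and
`∫ s u = |u|_K`; as `|u|_K > 0`, the inequality `∫ s u ≤ ‖s‖_* |u|_K` then forces `‖s‖_* = 1`.
-/

section

variable {Ω : Type*} [MeasurableSpace Ω] {μ : Measure Ω} {K : ℝ≥0∞} {f s u v w : Ω → ℝ}

variable (μ) in
lemma exists_subset_measure_le_forall_le_two_mul (C : Set Ω) {r : ℝ≥0∞} (hr : r ≠ ∞) :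
    ∃ D ⊆ C, MeasurableSet D ∧ μ D ≤ r ∧
      ∀ D' ⊆ C, MeasurableSet D' → μ D' ≤ r → μ D' ≤ 2 * μ D := by
  set δ := ⨆ (D' : Set Ω) (_ : D' ⊆ C ∧ MeasurableSet D' ∧ μ D' ≤ r), μ D'
  have le_δ : ∀ D' ⊆ C, MeasurableSet D' → μ D' ≤ r → μ D' ≤ δ := fun D' hD'C hD' hD'r =>
    le_iSup₂ (f := fun D' (_ : D' ⊆ C ∧ MeasurableSet D' ∧ μ D' ≤ r) => μ D') D' ⟨hD'C, hD', hD'r⟩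
  rcases eq_or_ne δ 0 with hδ0 | hδ0
  · exact ⟨∅, empty_subset _, .empty, by simp, fun D' hD'C hD' hD'r =>
      (le_δ D' hD'C hD' hD'r).trans (by simp [hδ0])⟩
  have hδr : δ ≤ r := iSup₂_le fun _ h => h.2.2
  obtain ⟨D, ⟨hDC, hD, hDr⟩, hδD⟩ : ∃ D, (D ⊆ C ∧ MeasurableSet D ∧ μ D ≤ r) ∧ δ / 2 < μ D := by
    have h : δ / 2 < ⨆ (D : Set Ω) (_ : D ⊆ C ∧ MeasurableSet D ∧ μ D ≤ r), μ D :=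
      ENNReal.half_lt_self hδ0 (ne_top_of_le_ne_top hr hδr)
    simpa only [lt_iSup_iff, exists_prop] using h
  refine ⟨D, hDC, hD, hDr, fun D' hD'C hD' hD'r => (le_δ D' hD'C hD' hD'r).trans ?_⟩
  rw [mul_comm, ← ENNReal.div_le_iff (by simp) (by simp)]
  exact hδD.le

namespace AtomFree

variable {A : Set Ω}

lemma exists_subset_two_mul_le (hμ : AtomFree μ) (hA : MeasurableSet A) (h0 : 0 < μ A) :
    ∃ B ⊆ A, MeasurableSet B ∧ 0 < μ B ∧ 2 * μ B ≤ μ A := by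
  obtain ⟨C, hC, hCA, hC0, hAC0⟩ := hμ A hA h0
  have hsum : μ C + μ (A \ C) = μ A := by
    rw [measure_add_sdiff hC.nullMeasurableSet, union_eq_right.mpr hCA]
  rcases le_total (μ C) (μ (A \ C)) with h | h
  · exact ⟨C, hCA, hC, hC0, by rw [two_mul, ← hsum]; gcongr⟩
  · exact ⟨A \ C, sdiff_subset, hA.diff hC, hAC0, by rw [two_mul, ← hsum]; gcongr⟩

lemma exists_subset_two_pow_mul_le (hμ : AtomFree μ) (hA : MeasurableSet A) (h0 : 0 < μ A)
    (n : ℕ) : ∃ B ⊆ A, MeasurableSet B ∧ 0 < μ B ∧ 2 ^ n * μ B ≤ μ A := by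
  induction n with
  | zero => exact ⟨A, subset_rfl, hA, h0, by simp⟩
  | succ n ih =>
    obtain ⟨B, hBA, hB, hB0, hBA'⟩ := ih
    obtain ⟨C, hCB, hC, hC0, hCB'⟩ := hμ.exists_subset_two_mul_le hB hB0
    refine ⟨C, hCB.trans hBA, hC, hC0, ?_⟩
    calc 2 ^ (n + 1) * μ C = 2 ^ n * (2 * μ C) := by ring
      _ ≤ 2 ^ n * μ B := by gcongr
      _ ≤ μ A := hBA'

lemma exists_subset_pos_le_of_ne_top (hμ : AtomFree μ) (hA : MeasurableSet A) (h0 : 0 < μ A)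
    (hA_fin : μ A ≠ ∞) {ε : ℝ≥0∞} (hε : 0 < ε) :
    ∃ B ⊆ A, MeasurableSet B ∧ 0 < μ B ∧ μ B ≤ ε := by
  obtain ⟨n, hn⟩ := ENNReal.exists_nat_mul_gt hε.ne' hA_fin
  obtain ⟨B, hBA, hB, hB0, hBA'⟩ := hμ.exists_subset_two_pow_mul_le hA h0 n
  refine ⟨B, hBA, hB, hB0, ?_⟩
  have hn2 : (n : ℝ≥0∞) ≤ 2 ^ n := by exact_mod_cast Nat.lt_two_pow_self.le
  refine (ENNReal.mul_le_mul_iff_right (a := 2 ^ n) (by positivity) (by simp)).mp ?_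
  calc 2 ^ n * μ B ≤ μ A := hBA'
    _ ≤ n * ε := hn.le
    _ ≤ 2 ^ n * ε := by gcongr

lemma exists_subset_pos_le [SigmaFinite μ] (hμ : AtomFree μ) (hA : MeasurableSet A)
    (h0 : 0 < μ A) {ε : ℝ≥0∞} (hε : 0 < ε) :
    ∃ B ⊆ A, MeasurableSet B ∧ 0 < μ B ∧ μ B ≤ ε := by
  obtain ⟨C, hC, hCA, hC0, hC_fin⟩ := Measure.exists_subset_measure_lt_top hA h0
  obtain ⟨B, hBC, hB, hB0, hBε⟩ := hμ.exists_subset_pos_le_of_ne_top hC hC0 hC_fin.ne hε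
  exact ⟨B, hBC.trans hCA, hB, hB0, hBε⟩

/-- Sierpiński's theorem. -/
lemma exists_subset_measure_eq (hμ : AtomFree μ) {C : Set Ω} (hC : MeasurableSet C)
    (hC_fin : μ C ≠ ∞) {r : ℝ≥0∞} (hr : r ≤ μ C) :
    ∃ B ⊆ C, MeasurableSet B ∧ μ B = r := by
  have hr_fin : r ≠ ∞ := ne_top_of_le_ne_top hC_fin hr
  -- Greedily add to `B` a subset of `C \ B` that is at least half as large as any admissible one.
  choose f hfC hf hfr hf_max using fun B : Set Ω =>
    exists_subset_measure_le_forall_le_two_mul μ (C \ B) (r := r - μ B) (by finiteness)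
  let seq : ℕ → Set Ω := fun n => Nat.rec ∅ (fun _ B => B ∪ f B) n
  have measure_seq_succ (n : ℕ) : μ (seq (n + 1)) = μ (seq n) + μ (f (seq n)) :=
    measure_union (disjoint_sdiff_right.mono_right (hfC _)) (hf _)
  have hseq (n : ℕ) : seq n ⊆ C ∧ MeasurableSet (seq n) ∧ μ (seq n) ≤ r := by
    induction n with
    | zero => exact ⟨empty_subset _, .empty, by simp [seq]⟩
    | succ n ih =>
      refine ⟨union_subset ih.1 ((hfC _).trans sdiff_subset), ih.2.1.union (hf _), ?_⟩
      rw [measure_seq_succ]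
      calc μ (seq n) + μ (f (seq n)) ≤ μ (seq n) + (r - μ (seq n)) := by gcongr; exact hfr _
        _ = r := add_tsub_cancel_of_le ih.2.2
  have hmono : Monotone seq := monotone_nat_of_le_succ fun n => subset_union_left
  set B := ⋃ n, seq n
  have hB_le : μ B ≤ r := by
    rw [hmono.measure_iUnion]
    exact iSup_le fun n => (hseq n).2.2
  refine ⟨B, iUnion_subset fun n => (hseq n).1, .iUnion fun n => (hseq n).2.1, ?_⟩
  refine hB_le.antisymm (not_lt.mp fun hlt => ?_)
  have hgap : 0 < μ (C \ B) :=
    (tsub_pos_of_lt hlt).trans_le ((tsub_le_tsub_right hr _).trans le_measure_sdiff)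
  obtain ⟨D, hDC, hD, hD0, hDr⟩ := hμ.exists_subset_pos_le_of_ne_top
    (hC.diff (.iUnion fun n => (hseq n).2.1)) hgap
    (ne_top_of_le_ne_top hC_fin (measure_mono sdiff_subset)) (tsub_pos_of_lt hlt)
  -- `D` stays admissible at every stage, so each greedy step adds at least `μ D / 2`.
  have hstep (n : ℕ) : μ D ≤ 2 * μ (f (seq n)) :=
    hf_max _ _ (hDC.trans (sdiff_subset_sdiff_right (subset_iUnion seq n))) hD
      (hDr.trans (tsub_le_tsub_left (measure_mono (subset_iUnion seq n)) r))
  have hgrowth (n : ℕ) : n * μ D ≤ 2 * μ (seq n) := by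
    induction n with
    | zero => simp
    | succ n ih =>
      calc ((n + 1 : ℕ) : ℝ≥0∞) * μ D = n * μ D + μ D := by push_cast; ring
        _ ≤ 2 * μ (seq n) + 2 * μ (f (seq n)) := add_le_add ih (hstep n)
        _ = 2 * μ (seq (n + 1)) := by rw [measure_seq_succ, mul_add]
  obtain ⟨n, hn⟩ := ENNReal.exists_nat_mul_gt hD0.ne' (by finiteness : 2 * r ≠ ∞)
  exact (hn.trans_le (hgrowth n)).not_ge (by gcongr; exact (hseq n).2.2)

end AtomFree

lemma MeasureTheory.Integrable.exists_measure_gt_lt (hf : Integrable f μ) (hK0 : 0 < K) :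
    ∃ n : ℕ, μ {x | (n : ℝ) < f x} < K := by
  have hanti : Antitone fun n : ℕ => {x | (n : ℝ) < f x} :=
    fun m _ hmn x hx => show (m : ℝ) < f x from (Nat.cast_le.mpr hmn).trans_lt hx
  have hInter : μ (⋂ n : ℕ, {x | (n : ℝ) < f x}) = 0 := by
    rw [measure_eq_zero_iff_ae_notMem]
    refine ae_of_all _ fun x hx => ?_
    obtain ⟨n, hn⟩ := exists_nat_ge (f x)
    exact (mem_iInter.mp hx n).not_ge hn
  rw [hanti.measure_iInter (fun n => nullMeasurableSet_lt aemeasurable_const hf.aemeasurable)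
    ⟨1, by simpa using (hf.measure_gt_lt_top one_pos).ne⟩] at hInter
  exact iInf_lt_iff.mp (hInter.trans_lt hK0)

lemma exists_threshold (hf : Integrable f μ) (hK0 : 0 < K) :
    ∃ t, 0 ≤ t ∧ μ {x | t < f x} ≤ K ∧ (0 < t → K ≤ μ {x | t ≤ f x}) := by
  set T := {t : ℝ | 0 ≤ t ∧ μ {x | t < f x} ≤ K}
  have hT : T.Nonempty := by
    obtain ⟨n, hn⟩ := hf.exists_measure_gt_lt hK0
    exact ⟨n, n.cast_nonneg, hn.le⟩
  have hT_bdd : BddBelow T := ⟨0, fun _ ht => ht.1⟩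
  refine ⟨sInf T, le_csInf hT fun _ ht => ht.1, ?_, fun ht0 => ?_⟩
  · obtain ⟨u, hu_anti, hu_lim, huT⟩ := exists_seq_tendsto_sInf hT hT_bdd
    have hmono : Monotone fun n => {x | u n < f x} :=
      fun _ n hmn x hx => show u n < f x from (hu_anti hmn).trans_lt hx
    have hunion : {x | sInf T < f x} = ⋃ n, {x | u n < f x} := by
      ext x
      rw [mem_iUnion]
      refine ⟨fun hx => (hu_lim.eventually (gt_mem_nhds hx)).exists, ?_⟩
      rintro ⟨n, hn⟩
      exact (csInf_le hT_bdd (huT n)).trans_lt hn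
    rw [hunion, hmono.measure_iUnion]
    exact iSup_le fun n => (huT n).2
  · obtain ⟨u, hu_mono, hu_mem, hu_lim⟩ := exists_seq_strictMono_tendsto' ht0
    have hanti : Antitone fun n => {x | u n < f x} :=
      fun m _ hmn x hx => show u m < f x from (hu_mono.monotone hmn).trans_lt hx
    have hinter : {x | sInf T ≤ f x} = ⋂ n, {x | u n < f x} := by
      ext x
      rw [mem_iInter]
      refine ⟨fun hx n => (hu_mem n).2.trans_le hx,
        fun hx => show sInf T ≤ f x from not_lt.mp fun hlt => ?_⟩
      obtain ⟨n, hn⟩ := (hu_lim.eventually (lt_mem_nhds hlt)).exists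
      exact (hx n).not_gt hn
    rw [hinter, hanti.measure_iInter
      (fun n => nullMeasurableSet_lt aemeasurable_const hf.aemeasurable)
      ⟨0, (hf.measure_gt_lt_top (hu_mem 0).1).ne⟩]
    refine le_iInf fun n => not_lt.mp fun hlt => ?_
    exact (csInf_le hT_bdd ⟨(hu_mem n).1.le, hlt.le⟩).not_gt (hu_mem n).2

lemma integral_max_sub_add_eq_setIntegral (hf : Integrable f μ) {t : ℝ} {A : Set Ω}
    (hA : MeasurableSet A) (hA_fin : μ A ≠ ∞) (hA_gt : {x | t < f x} ⊆ A)
    (hA_ge : A ⊆ {x | t ≤ f x}) :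
    ∫ x, max (f x - t) 0 ∂μ + t * μ.real A = ∫ x in A, f x ∂μ := by
  have hmax : (fun x => max (f x - t) 0) = A.indicator fun x => f x - t := by
    funext x
    by_cases hx : x ∈ A
    · rw [indicator_of_mem hx, max_eq_left (sub_nonneg.mpr (hA_ge hx))]
    · rw [indicator_of_notMem hx, max_eq_right (sub_nonpos.mpr (not_lt.mp fun h => hx (hA_gt h)))]
  rw [hmax, integral_indicator hA, integral_sub hf.integrableOn (integrableOn_const hA_fin),
    setIntegral_const, smul_eq_mul]
  ring

lemma AtomFree.exists_setIntegral_eq (hμ : AtomFree μ) (hK0 : 0 < K) (hK_fin : K ≠ ∞)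
    (hf : Integrable f μ) (hfm : Measurable f) :
    ∃ t, 0 ≤ t ∧ ∃ A, MeasurableSet A ∧ μ A ≤ K ∧
      ∫ x, max (f x - t) 0 ∂μ + t * K.toReal = ∫ x in A, f x ∂μ := by
  obtain ⟨t, ht0, hgt, hge⟩ := exists_threshold hf hK0
  have hS : MeasurableSet {x | t < f x} := measurableSet_lt measurable_const hfm
  rcases ht0.eq_or_lt with rfl | ht0
  · refine ⟨0, le_rfl, _, hS, hgt, ?_⟩
    simpa using integral_max_sub_add_eq_setIntegral hf hS (ne_top_of_le_ne_top hK_fin hgt)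
      subset_rfl (ofPred_subset_ofPred.mpr fun _ => le_of_lt)
  -- Complete `{t < f}` to a set of measure `K` by a piece of the level set `{f = t}`.
  have hT : MeasurableSet {x | t ≤ f x} := measurableSet_le measurable_const hfm
  obtain ⟨B, hB_sub, hB, hBμ⟩ := hμ.exists_subset_measure_eq (hT.diff hS)
    (ne_top_of_le_ne_top (hf.measure_ge_lt_top ht0).ne (measure_mono sdiff_subset))
    ((tsub_le_tsub_right (hge ht0) _).trans le_measure_sdiff)
  have hA : μ ({x | t < f x} ∪ B) = K := by
    rw [measure_union (disjoint_sdiff_right.mono_right hB_sub) hB, hBμ, add_tsub_cancel_of_le hgt]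
  refine ⟨t, ht0.le, _, hS.union hB, hA.le, ?_⟩
  rw [← integral_max_sub_add_eq_setIntegral hf (hS.union hB) (hA ▸ hK_fin) subset_union_left
    (union_subset (ofPred_subset_ofPred.mpr fun _ => le_of_lt) (hB_sub.trans sdiff_subset)),
    measureReal_def, hA]

lemma le_largestK (hv : Integrable v μ) {A : Set Ω} (hA : MeasurableSet A) (hAK : μ A ≤ K) :
    ∫ x in A, |v x| ∂μ ≤ largestK μ K v := by
  refine le_csSup ⟨∫ x, |v x| ∂μ, ?_⟩ ⟨A, hA, hAK, rfl⟩
  rintro _ ⟨B, -, -, rfl⟩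
  exact setIntegral_le_integral hv.abs (ae_of_all μ fun x => abs_nonneg _)

lemma largestK_le {c : ℝ} (hc : ∀ A, MeasurableSet A → μ A ≤ K → ∫ x in A, |v x| ∂μ ≤ c) :
    largestK μ K v ≤ c := by
  refine csSup_le ⟨0, ∅, .empty, by simp, by simp⟩ ?_
  rintro _ ⟨A, hA, hAK, rfl⟩
  exact hc A hA hAK

lemma largestK_congr_ae (h : v =ᵐ[μ] w) : largestK μ K v = largestK μ K w := by
  have hA (A : Set Ω) : ∫ x in A, |v x| ∂μ = ∫ x in A, |w x| ∂μ :=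
    integral_congr_ae (ae_restrict_of_ae (h.mono fun x hx => by simp only [hx]))
  simp only [largestK, hA]

lemma largestK_const_mul_le (hv : Integrable v μ) {c : ℝ} (hc : 0 ≤ c) :
    largestK μ K (fun x => c * v x) ≤ c * largestK μ K v := by
  refine largestK_le fun A hA hAK => ?_
  simp_rw [abs_mul, abs_of_nonneg hc, integral_const_mul]
  gcongr
  exact le_largestK hv hA hAK

lemma largestK_le_of_abs_le_indicator {F : Set Ω} (hF : MeasurableSet F) (hF_fin : μ F ≠ ∞)
    (hv : ∀ x, |v x| ≤ F.indicator 1 x) : largestK μ K v ≤ (min K (μ F)).toReal := by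
  refine largestK_le fun A hA hAK => ?_
  calc ∫ x in A, |v x| ∂μ ≤ ∫ x in A, F.indicator 1 x ∂μ :=
        integral_mono_of_nonneg (ae_of_all _ fun _ => abs_nonneg _)
          ((integrable_indicator_iff hF).mpr (integrableOn_const hF_fin)).integrableOn
          (ae_of_all _ hv)
    _ = μ.real (A ∩ F) := by
        rw [setIntegral_indicator hF, Pi.one_def, setIntegral_const, smul_eq_mul, mul_one]
    _ ≤ (min K (μ F)).toReal := ENNReal.toReal_mono (by simp [hF_fin])
        (le_min ((measure_mono inter_subset_left).trans hAK) (measure_mono inter_subset_right))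

lemma largestK_pos [SigmaFinite μ] (hμ : AtomFree μ) (hK0 : 0 < K) (hv : Integrable v μ)
    (hv0 : ¬v =ᵐ[μ] 0) : 0 < largestK μ K v := by
  rw [largestK_congr_ae hv.1.ae_eq_mk]
  set w := hv.1.mk v
  have hw : Integrable w μ := hv.congr hv.1.ae_eq_mk
  have hsupp : 0 < μ (Function.support w) := by
    refine pos_iff_ne_zero.mpr fun h => hv0 (hv.1.ae_eq_mk.trans ?_)
    exact measure_eq_zero_iff_ae_notMem.mp h |>.mono fun x hx => not_not.mp hx
  obtain ⟨B, hB_supp, hB, hB0, hBK⟩ :=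
    hμ.exists_subset_pos_le hv.1.stronglyMeasurable_mk.measurableSet_support hsupp hK0
  refine lt_of_lt_of_le ?_ (le_largestK hw hB hBK)
  rw [setIntegral_pos_iff_support_of_nonneg_ae (ae_of_all _ fun _ => abs_nonneg _)
    hw.abs.integrableOn, inter_eq_right.mpr fun x hx => by simpa using hB_supp hx]
  exact hB0

theorem integral_mul_le_mul_largestK (hμ : AtomFree μ) (hK0 : 0 < K) (hK_fin : K ≠ ∞)
    {a : ℝ} (ha : 0 ≤ a) (hs : Integrable s μ) (hsa : ∀ᵐ x ∂μ, |s x| ≤ a)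
    (hs1 : ∫ x, |s x| ∂μ ≤ a * K.toReal) (hv : Integrable v μ) :
    ∫ x, s x * v x ∂μ ≤ a * largestK μ K v := by
  have hvw := hv.1.ae_eq_mk
  set w := hv.1.mk v
  have hsvw : (fun x => s x * v x) =ᵐ[μ] fun x => s x * w x :=
    hvw.mono fun x hx => by simp only [hx]
  rw [largestK_congr_ae hvw, integral_congr_ae hsvw]
  have hw : Integrable w μ := hv.congr hvw
  have hwm : Measurable w := hv.1.stronglyMeasurable_mk.measurable
  obtain ⟨t, ht0, A, hA, hAK, hA_eq⟩ := hμ.exists_setIntegral_eq hK0 hK_fin hw.abs hwm.abs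
  have htrunc : Integrable (fun x => max (|w x| - t) 0) μ :=
    hw.abs.mono' (by fun_prop) (ae_of_all _ fun x => by
      rw [Real.norm_eq_abs, abs_of_nonneg (le_max_right _ _)]
      exact max_le (by linarith) (abs_nonneg _))
  have hpt : ∀ᵐ x ∂μ, s x * w x ≤ a * max (|w x| - t) 0 + t * |s x| := hsa.mono fun x hx => by
    have hsw : s x * w x ≤ |s x| * |w x| := (le_abs_self _).trans (abs_mul _ _).le
    rcases le_total (|w x|) t with h | h
    · have := mul_le_mul_of_nonneg_left h (abs_nonneg (s x))
      nlinarith [mul_nonneg ha (le_max_right (|w x| - t) 0)]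
    · rw [max_eq_left (sub_nonneg.mpr h)]
      nlinarith [mul_le_mul_of_nonneg_right hx (sub_nonneg.mpr h)]
  calc ∫ x, s x * w x ∂μ ≤ ∫ x, (a * max (|w x| - t) 0 + t * |s x|) ∂μ :=
        integral_mono_ae (hw.bdd_mul hs.1 hsa) ((htrunc.const_mul a).add (hs.abs.const_mul t)) hpt
    _ = a * ∫ x, max (|w x| - t) 0 ∂μ + t * ∫ x, |s x| ∂μ := by
        rw [integral_add (htrunc.const_mul a) (hs.abs.const_mul t), integral_const_mul,
          integral_const_mul]
    _ ≤ a * ∫ x, max (|w x| - t) 0 ∂μ + t * (a * K.toReal) := by gcongr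
    _ = a * ∫ x in A, |w x| ∂μ := by rw [← hA_eq]; ring
    _ ≤ a * largestK μ K w := by gcongr; exact le_largestK hw hA hAK

lemma measurable_sign_real : Measurable fun r : ℝ => (SignType.sign r : ℝ) := by
  refine Monotone.measurable fun a b hab => ?_
  rcases lt_trichotomy a 0 with ha | ha | ha <;> rcases lt_trichotomy b 0 with hb | hb | hb <;>
    simp [ha, hb] <;> linarith

lemma ae_abs_le_of_eLpNorm_top_le {a : ℝ≥0∞} (ha : a ≠ ∞) (h : eLpNorm s ∞ μ ≤ a) :
    ∀ᵐ x ∂μ, |s x| ≤ a.toReal := by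
  filter_upwards [ae_le_eLpNormEssSup (f := s) (μ := μ)] with x hx
  rw [← eLpNorm_exponent_top] at hx
  simpa using ENNReal.toReal_mono ha (hx.trans h)

lemma setIntegral_abs_le_of_forall_integral_mul_le (hs : AEStronglyMeasurable s μ)
    (h : ∀ v, Integrable v μ → ∫ x, s x * v x ∂μ ≤ largestK μ K v) {F : Set Ω}
    (hF : MeasurableSet F) (hF_fin : μ F ≠ ∞) :
    ∫ x in F, |s x| ∂μ ≤ (min K (μ F)).toReal := by
  set v := F.indicator fun x => (SignType.sign (s x) : ℝ)
  have hv_le (x : Ω) : |v x| ≤ F.indicator 1 x := by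
    by_cases hx : x ∈ F
    · rcases lt_trichotomy (s x) 0 with h | h | h <;> simp [v, hx, h]
    · simp [v, hx]
  have hv : Integrable v μ := by
    refine (integrable_indicator_iff hF).mpr
      (Measure.integrableOn_of_bounded hF_fin (measurable_sign_real.comp_aemeasurable
        hs.aemeasurable).aestronglyMeasurable (M := 1) (ae_of_all _ fun x => ?_))
    rcases lt_trichotomy (s x) 0 with h | h | h <;> simp [h]
  have hsv : (fun x => s x * v x) = F.indicator fun x => |s x| := by
    funext x
    by_cases hx : x ∈ F <;> simp [v, hx]
  calc ∫ x in F, |s x| ∂μ = ∫ x, s x * v x ∂μ := by rw [hsv, integral_indicator hF]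
    _ ≤ largestK μ K v := h v hv
    _ ≤ (min K (μ F)).toReal := largestK_le_of_abs_le_indicator hF hF_fin hv_le

lemma ae_abs_le_one_of_forall_integral_mul_le [SigmaFinite μ] (hμ : AtomFree μ) (hK0 : 0 < K)
    (hK_fin : K ≠ ∞) (hs : MemLp s ∞ μ)
    (h : ∀ v, Integrable v μ → ∫ x, s x * v x ∂μ ≤ largestK μ K v) :
    ∀ᵐ x ∂μ, |s x| ≤ 1 := by
  obtain ⟨G, hG_sub, hG, hG_ae⟩ :=
    (nullMeasurableSet_lt aemeasurable_const hs.1.aemeasurable.abs :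
      NullMeasurableSet {x | 1 < |s x|} μ).exists_measurable_subset_ae_eq
  suffices μ G = 0 by simpa [ae_iff, not_le] using (measure_congr hG_ae).symm.trans this
  by_contra hG0
  -- A piece `B ⊆ G` with `0 < μ B ≤ K` would have `μ B < ∫_B |s| ≤ μ B`.
  obtain ⟨B, hBG, hB, hB0, hBK⟩ := hμ.exists_subset_pos_le hG (pos_iff_ne_zero.mpr hG0) hK0
  have hB_fin : μ B ≠ ∞ := ne_top_of_le_ne_top hK_fin hBK
  have hle := setIntegral_abs_le_of_forall_integral_mul_le hs.1 h hB hB_fin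
  rw [min_eq_right hBK] at hle
  have hsB : IntegrableOn (fun x => |s x|) B μ :=
    (Measure.integrableOn_of_bounded hB_fin hs.1
      (ae_restrict_of_ae (ae_abs_le_of_eLpNorm_top_le hs.2.ne le_rfl))).abs
  have hint : IntegrableOn (fun x => |s x| - 1) B μ := hsB.sub (integrableOn_const hB_fin)
  have hpos : 0 < ∫ x in B, (|s x| - 1) ∂μ := by
    rw [setIntegral_pos_iff_support_of_nonneg_ae
      (ae_restrict_of_forall_mem hB fun x hx => sub_nonneg.mpr (hG_sub (hBG hx)).le) hint,
      inter_eq_right.mpr fun x hx => Function.mem_support.mpr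
        (sub_ne_zero.mpr (hG_sub (hBG hx)).ne')]
    exact hB0
  rw [integral_sub hsB (integrableOn_const hB_fin), setIntegral_const, smul_eq_mul,
    mul_one] at hpos
  exact (hle.trans_lt (sub_pos.mp hpos)).ne rfl

lemma lintegral_nnnorm_le_of_forall_integral_mul_le [SigmaFinite μ]
    (hs : AEStronglyMeasurable s μ) (hs1 : ∀ᵐ x ∂μ, |s x| ≤ 1)
    (h : ∀ v, Integrable v μ → ∫ x, s x * v x ∂μ ≤ largestK μ K v) :
    ∫⁻ x, ‖s x‖₊ ∂μ ≤ K := by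
  refine lintegral_le_of_forall_fin_meas_le K fun F hF hF_fin => ?_
  have hsF : IntegrableOn s F μ :=
    Measure.integrableOn_of_bounded hF_fin hs (M := 1) (ae_restrict_of_ae hs1)
  calc ∫⁻ x in F, ‖s x‖₊ ∂μ = ENNReal.ofReal (∫ x in F, |s x| ∂μ) :=
        (ofReal_integral_norm_eq_lintegral_enorm hsF).symm
    _ ≤ ENNReal.ofReal (min K (μ F)).toReal :=
        ENNReal.ofReal_le_ofReal (setIntegral_abs_le_of_forall_integral_mul_le hs h hF hF_fin)
    _ ≤ K := ENNReal.ofReal_toReal_le.trans (min_le_left _ _)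

lemma integrable_and_integral_abs_le_of_lintegral_nnnorm_le (hs : AEStronglyMeasurable s μ)
    {c : ℝ≥0∞} (hc : c ≠ ∞) (h : ∫⁻ x, ‖s x‖₊ ∂μ ≤ c) : Integrable s μ ∧ ∫ x, |s x| ∂μ ≤ c.toReal :=
  ⟨⟨hs, h.trans_lt hc.lt_top⟩, by
    simp_rw [← Real.norm_eq_abs, integral_norm_eq_lintegral_enorm hs]
    exact ENNReal.toReal_mono hc h⟩

theorem forall_integral_mul_le_largestK_iff [SigmaFinite μ] (hμ : AtomFree μ) (hK0 : 0 < K)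
    (hK_fin : K ≠ ∞) (hs : MemLp s ∞ μ) :
    (∀ v, Integrable v μ → ∫ x, s x * v x ∂μ ≤ largestK μ K v) ↔
      eLpNorm s ∞ μ ≤ 1 ∧ ∫⁻ x, ‖s x‖₊ ∂μ ≤ K := by
  refine ⟨fun h => ?_, fun ⟨h_top, h_one⟩ v hv => ?_⟩
  · have hs1 := ae_abs_le_one_of_forall_integral_mul_le hμ hK0 hK_fin hs h
    refine ⟨?_, lintegral_nnnorm_le_of_forall_integral_mul_le hs.1 hs1 h⟩
    rw [eLpNorm_exponent_top, ← ENNReal.ofReal_one]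
    exact eLpNormEssSup_le_of_ae_bound (by simpa using hs1)
  · obtain ⟨hs_int, hs_one⟩ :=
      integrable_and_integral_abs_le_of_lintegral_nnnorm_le hs.1 hK_fin h_one
    simpa using integral_mul_le_mul_largestK hμ hK0 hK_fin zero_le_one hs_int
      (by simpa using ae_abs_le_of_eLpNorm_top_le ENNReal.one_ne_top h_top)
      (by simpa using hs_one) hv

noncomputable def largestKDual (μ : Measure Ω) (K : ℝ≥0∞) (s : Ω → ℝ) : ℝ≥0∞ :=
  max (eLpNorm s ∞ μ) (K⁻¹ * ∫⁻ x, ‖s x‖₊ ∂μ)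

lemma largestKDual_le_one_iff (hK0 : K ≠ 0) (hK_fin : K ≠ ∞) :
    largestKDual μ K s ≤ 1 ↔ eLpNorm s ∞ μ ≤ 1 ∧ ∫⁻ x, ‖s x‖₊ ∂μ ≤ K := by
  rw [largestKDual, max_le_iff, ENNReal.inv_mul_le_iff hK0 hK_fin, mul_one]

theorem integral_mul_le_largestKDual_mul (hμ : AtomFree μ) (hK0 : 0 < K) (hK_fin : K ≠ ∞)
    (hs : AEStronglyMeasurable s μ) (hs_fin : largestKDual μ K s ≠ ∞) (hu : Integrable u μ) :
    ∫ x, s x * u x ∂μ ≤ (largestKDual μ K s).toReal * largestK μ K u := by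
  have h_one : ∫⁻ x, ‖s x‖₊ ∂μ ≤ K * largestKDual μ K s :=
    (ENNReal.inv_mul_le_iff hK0.ne' hK_fin).mp (le_max_right _ _)
  obtain ⟨hs_int, hs_one⟩ :=
    integrable_and_integral_abs_le_of_lintegral_nnnorm_le hs (by finiteness) h_one
  refine integral_mul_le_mul_largestK hμ hK0 hK_fin ENNReal.toReal_nonneg hs_int
    (ae_abs_le_of_eLpNorm_top_le hs_fin (le_max_left _ _)) ?_ hu
  rwa [ENNReal.toReal_mul, mul_comm] at hs_one

lemma largestKDual_eq_one_of_integral_mul_eq (hμ : AtomFree μ) (hK0 : 0 < K) (hK_fin : K ≠ ∞)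
    (hs : AEStronglyMeasurable s μ) (hs_le : largestKDual μ K s ≤ 1) (hu : Integrable u μ)
    (hsu : ∫ x, s x * u x ∂μ = largestK μ K u) (hu_pos : 0 < largestK μ K u) :
    largestKDual μ K s = 1 := by
  refine hs_le.antisymm (not_lt.mp fun hlt => ?_)
  have hlt' : (largestKDual μ K s).toReal < 1 := by
    simpa using ENNReal.toReal_strict_mono ENNReal.one_ne_top hlt
  have := integral_mul_le_largestKDual_mul hμ hK0 hK_fin hs (ne_top_of_le_ne_top
    ENNReal.one_ne_top hs_le) hu
  nlinarith

theorem subgradient_largestK_iff (hs : MemLp s ∞ μ) (hu : Integrable u μ) :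
    (∀ v, Integrable v μ → largestK μ K v - largestK μ K u ≥ ∫ x, s x * (v x - u x) ∂μ) ↔
      (∀ v, Integrable v μ → ∫ x, s x * v x ∂μ ≤ largestK μ K v) ∧
        ∫ x, s x * u x ∂μ = largestK μ K u := by
  have hsub {v} (hv : Integrable v μ) :
      ∫ x, s x * (v x - u x) ∂μ = ∫ x, s x * v x ∂μ - ∫ x, s x * u x ∂μ := by
    simp_rw [mul_sub]
    exact integral_sub (hv.mul_of_top_right hs) (hu.mul_of_top_right hs)
  refine ⟨fun h => ?_, fun ⟨h, hsu⟩ v hv => ?_⟩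
  · -- Testing against `0 • u` and `2 • u` pins down `∫ s u`.
    have h0 := h _ (hu.const_mul 0)
    have h2 := h _ (hu.const_mul 2)
    rw [hsub (hu.const_mul 0)] at h0
    rw [hsub (hu.const_mul 2)] at h2
    simp only [mul_left_comm (s _), integral_const_mul] at h0 h2
    have hsu : ∫ x, s x * u x ∂μ = largestK μ K u := by
      linarith [largestK_const_mul_le (K := K) hu le_rfl,
        largestK_const_mul_le (K := K) hu zero_le_two]
    refine ⟨fun v hv => ?_, hsu⟩
    linarith [h v hv, hsub hv]
  · rw [hsub hv, hsu]
    linarith [h v hv]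

end

/-- in an atom-free σ-finite space, identifying `(L¹)' = L^∞`, the convex
subdifferential of `|·|_K` at `0` is `{ s ∈ L^∞ : ‖s‖_∞ ≤ 1, ‖s‖₁ ≤ K }`, and at
`u ≠ 0` it is `{ s ∈ L^∞ : max(‖s‖_∞, K⁻¹‖s‖₁) = 1, ∫ s u dμ = |u|_K }`. -/
theorem stmt12 {Ω : Type*} [MeasurableSpace Ω] (μ : Measure Ω) [SigmaFinite μ]
    (hμ : AtomFree μ) (K : ℝ≥0∞) (hK0 : 0 < K) (hK : K < μ Set.univ) :
    (∀ s : Lp ℝ ∞ μ,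
      (∀ v : Ω → ℝ, Integrable v μ →
          (∫ x, s x * v x ∂μ) ≤ largestK μ K v) ↔
        (eLpNorm (s : Ω → ℝ) ∞ μ ≤ 1 ∧ (∫⁻ x, ‖(s : Ω → ℝ) x‖₊ ∂μ) ≤ K)) ∧
    (∀ u : Ω → ℝ, Integrable u μ → ¬ (u =ᵐ[μ] 0) →
      ∀ s : Lp ℝ ∞ μ,
        (∀ v : Ω → ℝ, Integrable v μ →
            largestK μ K v - largestK μ K u ≥ ∫ x, s x * (v x - u x) ∂μ) ↔
          (max (eLpNorm (s : Ω → ℝ) ∞ μ) (K⁻¹ * ∫⁻ x, ‖(s : Ω → ℝ) x‖₊ ∂μ) = 1 ∧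
            (∫ x, s x * u x ∂μ) = largestK μ K u)) := by
  have hK_fin : K ≠ ∞ := hK.ne_top
  have hdual (s : Lp ℝ ∞ μ) := forall_integral_mul_le_largestK_iff hμ hK0 hK_fin (Lp.memLp s)
  refine ⟨hdual, fun u hu hu0 s => ?_⟩
  rw [subgradient_largestK_iff (Lp.memLp s) hu, hdual, ← largestKDual_le_one_iff hK0.ne' hK_fin]
  exact ⟨fun ⟨hs_le, hsu⟩ => ⟨largestKDual_eq_one_of_integral_mul_eq hμ hK0 hK_fin
    (Lp.aestronglyMeasurable s) hs_le hu hsu (largestK_pos hμ hK0 hu hu0), hsu⟩,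
    fun ⟨hs_one, hsu⟩ => ⟨hs_one.le, hsu⟩⟩
end

section
/- Let (Ω, 𝒜, μ) be a σ-finite measure space and K ∈ (0, μ(Ω)). Then { s ∈ L^∞(Ω) : ‖s‖_∞ ≤ 1, μ(supp s) ≤ K } ⊆ ∂|·|_K(0) ⊆ { s ∈ L^∞(Ω) : ‖s‖_∞ ≤ 1, ‖s‖_1 ≤ K }, where ∂|·|_K(0) is the convex subdifferential of the largest-K-norm at 0 in L^1(Ω). -/
/-!
If `|s| ≤ 1` and `μ(supp s) ≤ K`, then `∫ s v` only sees `v` on a measurable hull `A` of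
`supp s`, where `|s v| ≤ |v|`; so it is at most `∫_A |v|`, one of the integrals whose supremum
is `|v|_K`.

Conversely, test a subgradient `s` against `v = 1_B · sign s` for `B` of finite measure: then
`∫ s v = ∫_B |s|`, while `|v| ≤ 1_B` gives `|v|_K ≤ μ(B)` and `|v|_K ≤ K`. The bounds
`∫_B |s| ≤ μ(B)` for all such `B` force `|s| ≤ 1` a.e. (this is where σ-finiteness enters), and
`∫_B |s| ≤ K` for all such `B` gives `‖s‖₁ ≤ K`.
-/

open MeasureTheory Set
open scoped ENNReal

lemma monotone_coe_sign : Monotone fun x : ℝ => (SignType.sign x : ℝ) := by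
  have cast_mono : ∀ s t : SignType, s ≤ t → (s : ℝ) ≤ t := by
    rintro (_ | _ | _) (_ | _ | _) h <;> first | exact absurd h (by decide) | norm_num
  exact fun a b hab => cast_mono _ _ (SignType.sign.monotone hab)

lemma abs_coe_sign_le_one (x : ℝ) : |(SignType.sign x : ℝ)| ≤ 1 := by
  rcases lt_trichotomy x 0 with hx | rfl | hx <;> simp [sign_neg, sign_pos, *]

lemma eLpNorm_top_le_one_iff {Ω : Type*} [MeasurableSpace Ω] {μ : Measure Ω} {f : Ω → ℝ} :
    eLpNorm f ∞ μ ≤ 1 ↔ ∀ᵐ x ∂μ, |f x| ≤ 1 := by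
  rw [eLpNorm_exponent_top]
  constructor
  · intro hf
    filter_upwards [ae_le_eLpNormEssSup (f := f) (μ := μ)] with x hx
    rw [← Real.norm_eq_abs, ← ENNReal.ofReal_le_one, ofReal_norm]
    exact hx.trans hf
  · intro hf
    simpa using eLpNormEssSup_le_of_ae_bound (C := 1) hf

lemma MeasureTheory.MemLp.integrableOn_of_top {Ω E : Type*} [MeasurableSpace Ω]
    [NormedAddCommGroup E] {μ : Measure Ω} {f : Ω → E} (hf : MemLp f ∞ μ) {B : Set Ω}
    (hB : μ B ≠ ∞) : IntegrableOn f B μ :=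
  have := isFiniteMeasure_restrict.2 hB
  (hf.restrict B).integrable le_top

section LargestK

variable {Ω : Type*} [MeasurableSpace Ω] {μ : Measure Ω} {K : ℝ≥0∞} {u : Ω → ℝ}

lemma largestK_set_nonempty (μ : Measure Ω) (K : ℝ≥0∞) (u : Ω → ℝ) :
    {r : ℝ | ∃ A : Set Ω, MeasurableSet A ∧ μ A ≤ K ∧ r = ∫ x in A, |u x| ∂μ}.Nonempty :=
  ⟨0, ∅, .empty, by simp, by simp⟩

lemma setIntegral_abs_le_largestK (hu : Integrable u μ) {A : Set Ω} (hA : MeasurableSet A)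
    (hAK : μ A ≤ K) : ∫ x in A, |u x| ∂μ ≤ largestK μ K u := by
  refine le_csSup ⟨∫ x, |u x| ∂μ, ?_⟩ ⟨A, hA, hAK, rfl⟩
  rintro _ ⟨B, -, -, rfl⟩
  exact setIntegral_le_integral hu.abs (.of_forall fun _ => abs_nonneg _)

lemma largestK_le_integral_abs (hu : Integrable u μ) : largestK μ K u ≤ ∫ x, |u x| ∂μ := by
  refine csSup_le (largestK_set_nonempty μ K u) ?_
  rintro _ ⟨A, -, -, rfl⟩
  exact setIntegral_le_integral hu.abs (.of_forall fun _ => abs_nonneg _)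

lemma largestK_le_toReal_of_abs_le_one (hK : K ≠ ∞) (hu : ∀ x, |u x| ≤ 1) :
    largestK μ K u ≤ K.toReal := by
  refine csSup_le (largestK_set_nonempty μ K u) ?_
  rintro _ ⟨A, -, hAK, rfl⟩
  calc ∫ x in A, |u x| ∂μ ≤ ‖∫ x in A, |u x| ∂μ‖ := Real.le_norm_self _
    _ ≤ 1 * μ.real A :=
      norm_setIntegral_le_of_norm_le_const (hAK.trans_lt hK.lt_top) fun x _ => by simpa using hu x
    _ ≤ K.toReal := by rw [one_mul]; exact ENNReal.toReal_mono hK hAK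

lemma largestK_indicator_le_measureReal {B : Set Ω} (hB : MeasurableSet B) (hBfin : μ B ≠ ∞)
    (hu : Integrable (B.indicator u) μ) (hu1 : ∀ x, |u x| ≤ 1) :
    largestK μ K (B.indicator u) ≤ μ.real B := by
  refine (largestK_le_integral_abs hu).trans ?_
  calc ∫ x, |B.indicator u x| ∂μ = ∫ x in B, |u x| ∂μ := by
        rw [← integral_indicator hB]
        exact integral_congr_ae (.of_forall fun x => by by_cases hx : x ∈ B <;> simp [hx])
    _ ≤ ‖∫ x in B, |u x| ∂μ‖ := Real.le_norm_self _
    _ ≤ 1 * μ.real B :=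
      norm_setIntegral_le_of_norm_le_const hBfin.lt_top fun x _ => by simpa using hu1 x
    _ = μ.real B := one_mul _

end LargestK

section Subdifferential

variable {Ω : Type*} [MeasurableSpace Ω] {μ : Measure Ω} {K : ℝ≥0∞} {s : Ω → ℝ}

-- `∂|·|_K(0)`, as a set of functions rather than of `L^∞` classes.
def largestKSubdiffZero (μ : Measure Ω) (K : ℝ≥0∞) : Set (Ω → ℝ) :=
  {s | ∀ v : Ω → ℝ, Integrable v μ → ∫ x, s x * v x ∂μ ≤ largestK μ K v}

lemma mem_largestKSubdiffZero_of_support (hs1 : ∀ᵐ x ∂μ, |s x| ≤ 1)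
    (hsupp : μ (Function.support s) ≤ K) : s ∈ largestKSubdiffZero μ K := by
  intro v hv
  set A := toMeasurable μ (Function.support s)
  have hsv : ∀ x, x ∉ A → s x * v x = 0 := fun x hx => by
    rw [Function.notMem_support.1 fun h => hx (subset_toMeasurable μ _ h), zero_mul]
  have hsv_le : ∀ᵐ x ∂μ.restrict A, ‖s x * v x‖ ≤ |v x| := ae_restrict_of_ae <|
    hs1.mono fun x hx => by
      rw [Real.norm_eq_abs, abs_mul]; exact mul_le_of_le_one_left (abs_nonneg _) hx
  calc ∫ x, s x * v x ∂μ = ∫ x in A, s x * v x ∂μ :=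
        (setIntegral_eq_integral_of_forall_compl_eq_zero hsv).symm
    _ ≤ ‖∫ x in A, s x * v x ∂μ‖ := Real.le_norm_self _
    _ ≤ ∫ x in A, |v x| ∂μ := norm_integral_le_of_norm_le hv.abs.integrableOn hsv_le
    _ ≤ largestK μ K v := setIntegral_abs_le_largestK hv (measurableSet_toMeasurable μ _)
        (by rwa [measure_toMeasurable])

lemma integrable_indicator_sign (hs : AEStronglyMeasurable s μ) {B : Set Ω}
    (hB : MeasurableSet B) (hBfin : μ B ≠ ∞) :
    Integrable (B.indicator fun x => (SignType.sign (s x) : ℝ)) μ :=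
  (integrable_indicator_iff hB).2 <| Measure.integrableOn_of_bounded (M := 1) hBfin
    (monotone_coe_sign.measurable.comp_aemeasurable hs.aemeasurable).aestronglyMeasurable
    (.of_forall fun x => abs_coe_sign_le_one (s x))

lemma setIntegral_abs_le_largestK_indicator_sign (h : s ∈ largestKSubdiffZero μ K)
    (hs : AEStronglyMeasurable s μ) {B : Set Ω} (hB : MeasurableSet B) (hBfin : μ B ≠ ∞) :
    ∫ x in B, |s x| ∂μ ≤ largestK μ K (B.indicator fun x => (SignType.sign (s x) : ℝ)) := by
  have hsign : ∫ x, s x * B.indicator (fun x => (SignType.sign (s x) : ℝ)) x ∂μ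
      = ∫ x in B, |s x| ∂μ := by
    simp_rw [← indicator_mul_right, self_mul_sign]
    exact integral_indicator hB
  exact hsign ▸ h _ (integrable_indicator_sign hs hB hBfin)

lemma setIntegral_abs_le_measureReal (h : s ∈ largestKSubdiffZero μ K)
    (hs : AEStronglyMeasurable s μ) {B : Set Ω} (hB : MeasurableSet B) (hBfin : μ B ≠ ∞) :
    ∫ x in B, |s x| ∂μ ≤ μ.real B :=
  (setIntegral_abs_le_largestK_indicator_sign h hs hB hBfin).trans <|
    largestK_indicator_le_measureReal hB hBfin (integrable_indicator_sign hs hB hBfin)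
      fun x => abs_coe_sign_le_one (s x)

lemma setIntegral_abs_le_toReal (h : s ∈ largestKSubdiffZero μ K) (hK : K ≠ ∞)
    (hs : AEStronglyMeasurable s μ) {B : Set Ω} (hB : MeasurableSet B) (hBfin : μ B ≠ ∞) :
    ∫ x in B, |s x| ∂μ ≤ K.toReal := by
  refine (setIntegral_abs_le_largestK_indicator_sign h hs hB hBfin).trans <|
    largestK_le_toReal_of_abs_le_one hK fun x => ?_
  by_cases hx : x ∈ B <;> simp [hx, abs_coe_sign_le_one]

variable [SigmaFinite μ]

lemma ae_abs_le_one_of_mem_largestKSubdiffZero (h : s ∈ largestKSubdiffZero μ K)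
    (hs : MemLp s ∞ μ) : ∀ᵐ x ∂μ, |s x| ≤ 1 := by
  have hone : ∀ B, μ B < ∞ → IntegrableOn (fun _ => (1 : ℝ)) B μ :=
    fun B hBfin => integrableOn_const hBfin.ne
  have habs : ∀ B, μ B < ∞ → IntegrableOn (fun x => |s x|) B μ :=
    fun B hBfin => (hs.integrableOn_of_top hBfin.ne).abs
  have := ae_nonneg_of_forall_setIntegral_nonneg_of_sigmaFinite (f := fun x => 1 - |s x|)
    (fun B _ hBfin => (hone B hBfin).sub (habs B hBfin)) fun B hB hBfin => by
      rw [integral_sub (hone B hBfin) (habs B hBfin), setIntegral_const, smul_eq_mul, mul_one,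
        sub_nonneg]
      exact setIntegral_abs_le_measureReal h hs.aestronglyMeasurable hB hBfin.ne
  exact this.mono fun x hx => sub_nonneg.1 hx

lemma lintegral_nnnorm_le_of_mem_largestKSubdiffZero (h : s ∈ largestKSubdiffZero μ K)
    (hK : K ≠ ∞) (hs : MemLp s ∞ μ) : ∫⁻ x, ‖s x‖₊ ∂μ ≤ K := by
  refine lintegral_le_of_forall_fin_meas_le K fun B hB hBfin => ?_
  calc ∫⁻ x in B, ‖s x‖₊ ∂μ = ENNReal.ofReal (∫ x in B, ‖s x‖ ∂μ) :=
        (ofReal_integral_norm_eq_lintegral_enorm (hs.integrableOn_of_top hBfin)).symm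
    _ ≤ ENNReal.ofReal K.toReal :=
        ENNReal.ofReal_le_ofReal (setIntegral_abs_le_toReal h hK hs.aestronglyMeasurable hB hBfin)
    _ = K := ENNReal.ofReal_toReal hK

end Subdifferential

theorem stmt16_general {Ω : Type*} [MeasurableSpace Ω] (μ : Measure Ω) [SigmaFinite μ]
    (K : ℝ≥0∞) (hK : K < μ Set.univ)
    (s : Ω → ℝ) (hs : MemLp s ∞ μ) :
    ((eLpNorm s ∞ μ ≤ 1 ∧ μ (Function.support s) ≤ K) →
      ∀ v : Ω → ℝ, Integrable v μ → (∫ x, s x * v x ∂μ) ≤ largestK μ K v) ∧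
    ((∀ v : Ω → ℝ, Integrable v μ → (∫ x, s x * v x ∂μ) ≤ largestK μ K v) →
      eLpNorm s ∞ μ ≤ 1 ∧ (∫⁻ x, ‖s x‖₊ ∂μ) ≤ K) :=
  ⟨fun ⟨hs1, hsupp⟩ => mem_largestKSubdiffZero_of_support (eLpNorm_top_le_one_iff.1 hs1) hsupp,
    fun h => ⟨eLpNorm_top_le_one_iff.2 (ae_abs_le_one_of_mem_largestKSubdiffZero h hs),
      lintegral_nnnorm_le_of_mem_largestKSubdiffZero h hK.ne_top hs⟩⟩

/-- for a σ-finite space, `s ∈ L^∞`, the inclusions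
`{ ‖s‖_∞ ≤ 1, μ(supp s) ≤ K } ⊆ ∂|·|_K(0) ⊆ { ‖s‖_∞ ≤ 1, ‖s‖₁ ≤ K }` hold, where
`∂|·|_K(0) = { s : ∫ s v dμ ≤ |v|_K for all v ∈ L¹ }`. -/
theorem stmt16 {Ω : Type*} [MeasurableSpace Ω] (μ : Measure Ω) [SigmaFinite μ]
    (K : ℝ≥0∞) (hK0 : 0 < K) (hK : K < μ Set.univ)
    (s : Ω → ℝ) (hs : MemLp s ∞ μ) :
    ((eLpNorm s ∞ μ ≤ 1 ∧ μ (Function.support s) ≤ K) →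
      ∀ v : Ω → ℝ, Integrable v μ → (∫ x, s x * v x ∂μ) ≤ largestK μ K v) ∧
    ((∀ v : Ω → ℝ, Integrable v μ → (∫ x, s x * v x ∂μ) ≤ largestK μ K v) →
      eLpNorm s ∞ μ ≤ 1 ∧ (∫⁻ x, ‖s x‖₊ ∂μ) ≤ K) :=
  stmt16_general μ K hK s hs
end
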